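/- arXiv:1207.6736 — 6 statements merged into one kernel-verified Lean document; each statement's English description precedes it below -/
import Mathlib

section
/- On the set $\mathcal{M}_+(\Omega,\mu_0)$ of finite measures equivalent to $\mu_0$, define $\mu' \preceq \mu$ iff $\mu' = \phi\mu$ with $\phi \in L^p(\Omega,\mu)$ for some $p>1$. Then $\preceq$ is transitive: if $\mu'' \preceq \mu'$ and $\mu' \preceq \mu$, then $\mu'' \preceq \mu$. Explicitly, if $\mu' = \phi\mu$ with $\phi \in L^p(\Omega,\mu)$ and $\mu'' = \psi\mu'$ with $\psi \in L^{p'}(\Omega,\mu')$ for $p,p'>1$, then $\psi\phi \in L^{p''}(\Omega,\mu)$ where $p'' = pp'/(p+p'-1) > 1$. -/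
open MeasureTheory ENNReal

/-! With `s = p + p' - 1` and `λ = (p' - 1)/s`, the pointwise identity
`(ψφ)^{pp'/s} = (ψ^{p'} φ)^{1-λ} (φ^p)^λ` and Hölder's inequality with weights `1 - λ, λ` bound
`∫ (ψφ)^{pp'/s} dμ` by `(∫ ψ^{p'} d(φμ))^{1-λ} (∫ φ^p dμ)^λ < ∞`. -/

lemma one_lt_mul_div_add_sub_one {p p' : ℝ} (hp : 1 < p) (hp' : 1 < p') :
    1 < p * p' / (p + p' - 1) := by
  rw [one_lt_div (by linarith)]
  nlinarith

lemma MeasureTheory.memLp_ofReal_iff {α E : Type*} [MeasurableSpace α] {μ : Measure α}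
    [NormedAddCommGroup E] {f : α → E} {p : ℝ} (hp : 0 < p) :
    MemLp f (ENNReal.ofReal p) μ ↔
      AEStronglyMeasurable f μ ∧ ∫⁻ a, ‖f a‖ₑ ^ p ∂μ < ∞ := by
  rw [MemLp, eLpNorm_lt_top_iff_lintegral_rpow_enorm_lt_top (by simpa using hp) ofReal_ne_top,
    toReal_ofReal hp.le]

namespace ENNReal

variable {p p' : ℝ}

lemma mul_rpow_eq_interpolation (hp : 0 < p) (hp' : 1 ≤ p') (x y : ℝ≥0∞) :
    (x * y) ^ (p * p' / (p + p' - 1)) =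
      (x ^ p' * y) ^ (p / (p + p' - 1)) * (y ^ p) ^ ((p' - 1) / (p + p' - 1)) := by
  have hs : 0 < p + p' - 1 := by linarith
  have hw₁ : 0 ≤ p / (p + p' - 1) := div_nonneg hp.le hs.le
  have hw₂ : 0 ≤ (p' - 1) / (p + p' - 1) := div_nonneg (by linarith) hs.le
  rw [mul_rpow_of_nonneg _ _ hw₁, ← rpow_mul, ← rpow_mul, mul_assoc,
    ← rpow_add_of_nonneg _ _ hw₁ (mul_nonneg hp.le hw₂), mul_rpow_of_nonneg _ _ (by positivity)]
  congr 2
  · field_simp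
  · field_simp
    ring

variable {α : Type*} [MeasurableSpace α] {μ : Measure α} {f g : α → ℝ≥0∞}

lemma lintegral_mul_rpow_le_interpolation (hf : AEMeasurable f μ) (hg : AEMeasurable g μ)
    (hp : 0 < p) (hp' : 1 ≤ p') :
    ∫⁻ a, (f a * g a) ^ (p * p' / (p + p' - 1)) ∂μ ≤
      (∫⁻ a, f a ^ p' * g a ∂μ) ^ (p / (p + p' - 1)) *
        (∫⁻ a, g a ^ p ∂μ) ^ ((p' - 1) / (p + p' - 1)) := by
  have hs : 0 < p + p' - 1 := by linarith
  simp_rw [mul_rpow_eq_interpolation hp hp']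
  exact lintegral_mul_norm_pow_le ((hf.pow_const p').mul hg) (hg.pow_const p)
    (div_nonneg hp.le hs.le) (div_nonneg (by linarith) hs.le) (by field_simp; ring)

lemma lintegral_mul_rpow_lt_top (hf : AEMeasurable f μ) (hg : AEMeasurable g μ)
    (hp : 0 < p) (hp' : 1 ≤ p') (hfg : ∫⁻ a, f a ^ p' * g a ∂μ < ∞)
    (hgp : ∫⁻ a, g a ^ p ∂μ < ∞) :
    ∫⁻ a, (f a * g a) ^ (p * p' / (p + p' - 1)) ∂μ < ∞ := by
  have hs : 0 < p + p' - 1 := by linarith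
  refine (lintegral_mul_rpow_le_interpolation hf hg hp hp').trans_lt (mul_lt_top ?_ ?_)
  · exact rpow_lt_top_of_nonneg (div_nonneg hp.le hs.le) hfg.ne
  · exact rpow_lt_top_of_nonneg (div_nonneg (by linarith) hs.le) hgp.ne

end ENNReal

theorem stmt_4_general {Ω : Type*} [MeasurableSpace Ω] (μ : Measure Ω)
    (φ ψ : Ω → ℝ) (hφpos : ∀ ω, 0 < φ ω)
    (p p' : ℝ) (hp : 1 < p) (hp' : 1 < p')
    (hφ : MemLp φ (ENNReal.ofReal p) μ)
    (hψ : MemLp ψ (ENNReal.ofReal p')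
      (μ.withDensity (fun ω => ENNReal.ofReal (φ ω)))) :
    1 < p * p' / (p + p' - 1) ∧
      MemLp (fun ω => ψ ω * φ ω) (ENNReal.ofReal (p * p' / (p + p' - 1))) μ := by
  have hq := one_lt_mul_div_add_sub_one hp hp'
  refine ⟨hq, ?_⟩
  have hdens : (fun ω => ENNReal.ofReal (φ ω)) = fun ω => ‖φ ω‖ₑ :=
    funext fun ω => (Real.enorm_eq_ofReal (hφpos ω).le).symm
  rw [hdens] at hψ
  rw [memLp_ofReal_iff (by linarith)] at hφ hψ ⊢
  have hψμ : AEStronglyMeasurable ψ μ := hψ.1.mono_ac <| withDensity_absolutelyContinuous'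
    hφ.1.enorm (.of_forall fun ω => enorm_ne_zero.mpr (hφpos ω).ne')
  rw [lintegral_withDensity_eq_lintegral_mul₀ hφ.1.enorm (hψμ.enorm.pow_const p')] at hψ
  refine ⟨hψμ.mul hφ.1, ?_⟩
  simp_rw [enorm_mul]
  refine lintegral_mul_rpow_lt_top hψμ.enorm hφ.1.enorm (by linarith) hp'.le ?_ hφ.2
  simpa only [Pi.mul_apply, mul_comm] using hψ.2

/-- Transitivity of the preorder `≼` on finite measures equivalent to `μ`:
if `μ' = φ·μ` with `φ ∈ L^p(μ)` and `μ'' = ψ·μ'` with `ψ ∈ L^{p'}(μ')`, `p, p' > 1`,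
then `ψφ ∈ L^{p''}(μ)` with `p'' = pp'/(p + p' - 1) > 1`; in particular `μ'' ≼ μ`. -/
theorem stmt_4 {Ω : Type*} [MeasurableSpace Ω] (μ : Measure Ω) [IsFiniteMeasure μ]
    (φ ψ : Ω → ℝ) (hφpos : ∀ ω, 0 < φ ω) (hψpos : ∀ ω, 0 < ψ ω)
    (p p' : ℝ) (hp : 1 < p) (hp' : 1 < p')
    (hφ : MemLp φ (ENNReal.ofReal p) μ)
    (hψ : MemLp ψ (ENNReal.ofReal p')
      (μ.withDensity (fun ω => ENNReal.ofReal (φ ω)))) :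
    1 < p * p' / (p + p' - 1) ∧
      MemLp (fun ω => ψ ω * φ ω) (ENNReal.ofReal (p * p' / (p + p' - 1))) μ :=
  stmt_4_general μ φ ψ hφpos p p' hp hp' hφ hψ
end

section
/- Let $\kappa: (\Omega_1,\mu_1) \to \Omega_2$ be a measurable map (statistic) and let $(M,\Omega_1,\mu_1,p_1)$ be a parametrized measure model with density $\bar p_1(x,\omega_1) = dp_1(x)/d\mu_1$. Then $\kappa$ is sufficient for the parameter $x \in M$ (i.e., $\bar p_1(x,\omega_1) = s(x,\kappa(\omega_1))\,t(\omega_1)$ $\mu_1$-a.e. for some functions $s: M\times\Omega_2 \to \mathbb{R}$ with $s(x,\cdot) \in L^1(\Omega_2,\kappa_*\mu_1)$ and $t \in L^1(\Omega_1,\mu_1)$) if and only if the ratio $r(x,\omega_1) := \bar p_1(x,\omega_1)/\kappa_*(\bar p_1)(x,\kappa(\omega_1))$ is independent of $x$ for $\mu_1$-almost all $\omega_1$, where $\kappa_*(\bar p_1)(x,\cdot) = d(\kappa_* p_1(x))/d(\kappa_*\mu_1)$. -/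
open MeasureTheory
open scoped ENNReal

theorem aux_map_withDensity_comp {Ω₁ Ω₂ : Type*} [MeasurableSpace Ω₁] [MeasurableSpace Ω₂]
    {κ : Ω₁ → Ω₂} (hκ : Measurable κ) (α : Measure Ω₁) {f : Ω₂ → ℝ≥0∞} (hf : Measurable f) :
    Measure.map κ (α.withDensity (fun ω => f (κ ω))) = (Measure.map κ α).withDensity f := by
  ext s hs
  rw [Measure.map_apply hκ hs, withDensity_apply _ (hκ hs), withDensity_apply _ hs,
    setLIntegral_map hs hf hκ]

theorem aux_ofReal_mul_split (a b : ℝ) :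
    ENNReal.ofReal (a * b)
      = ENNReal.ofReal a * ENNReal.ofReal b + ENNReal.ofReal (-a) * ENNReal.ofReal (-b) := by
  rcases le_total 0 a with ha | ha <;> rcases le_total 0 b with hb | hb
  · have h1 : ENNReal.ofReal (-a) = 0 := ENNReal.ofReal_of_nonpos (by linarith)
    simp [ENNReal.ofReal_mul ha, h1]
  · have h1 : ENNReal.ofReal b = 0 := ENNReal.ofReal_of_nonpos hb
    have h2 : ENNReal.ofReal (-a) = 0 := ENNReal.ofReal_of_nonpos (by linarith)
    have h3 : ENNReal.ofReal (a * b) = 0 :=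
      ENNReal.ofReal_of_nonpos (mul_nonpos_of_nonneg_of_nonpos ha hb)
    simp [h1, h2, h3]
  · have h1 : ENNReal.ofReal a = 0 := ENNReal.ofReal_of_nonpos ha
    have h2 : ENNReal.ofReal (-b) = 0 := ENNReal.ofReal_of_nonpos (by linarith)
    have h3 : ENNReal.ofReal (a * b) = 0 :=
      ENNReal.ofReal_of_nonpos (mul_nonpos_of_nonpos_of_nonneg ha hb)
    simp [h1, h2, h3]
  · have h0 : a * b = (-a) * (-b) := by ring
    have h1 : ENNReal.ofReal a = 0 := ENNReal.ofReal_of_nonpos ha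
    rw [h0, ENNReal.ofReal_mul (by linarith), h1, zero_mul, zero_add]

/-- Fisher–Neyman characterization: a statistic `κ` is sufficient for the parameter of a
parametrized measure model (i.e. the densities factorize as
`p̄₁(x,ω) = s(x, κ(ω)) t(ω)` a.e. with `s(x,·) ∈ L¹(κ_*μ₁)`, `t ∈ L¹(μ₁)`) if and only if
the ratio `r(x,ω) = p̄₁(x,ω) / κ_*(p̄₁)(x, κ(ω))` is independent of `x` for
`μ₁`-almost all `ω`, where `κ_*(p̄₁)(x,·)` is the density of `κ_*(p₁(x))`
w.r.t. `κ_*(μ₁)`. -/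
theorem stmt_6 {M Ω₁ Ω₂ : Type*} [MeasurableSpace Ω₁] [MeasurableSpace Ω₂]
    (μ₁ : Measure Ω₁) [IsFiniteMeasure μ₁]
    (κ : Ω₁ → Ω₂) (hκ : Measurable κ)
    (p₁ : M → Ω₁ → ℝ) (hp₁pos : ∀ x ω, 0 < p₁ x ω)
    (hp₁meas : ∀ x, Measurable (p₁ x))
    (hp₁int : ∀ x, Integrable (p₁ x) μ₁)
    -- `q x` is the density `κ_*(p̄₁)(x,·) = d(κ_* p₁(x))/d(κ_* μ₁)`
    (q : M → Ω₂ → ℝ) (hqpos : ∀ x ω₂, 0 < q x ω₂) (hqmeas : ∀ x, Measurable (q x))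
    (hq : ∀ x, Measure.map κ (μ₁.withDensity (fun ω => ENNReal.ofReal (p₁ x ω)))
        = (Measure.map κ μ₁).withDensity (fun ω₂ => ENNReal.ofReal (q x ω₂))) :
    (∃ (s : M → Ω₂ → ℝ) (t : Ω₁ → ℝ),
        (∀ x, Integrable (s x) (Measure.map κ μ₁)) ∧ Integrable t μ₁ ∧
        ∀ x, ∀ᵐ ω ∂μ₁, p₁ x ω = s x (κ ω) * t ω) ↔
      (∃ r : Ω₁ → ℝ, ∀ x, ∀ᵐ ω ∂μ₁, p₁ x ω / q x (κ ω) = r ω) := by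
  rcases isEmpty_or_nonempty M with hM | hM
  · constructor
    · rintro -
      exact ⟨fun _ => 0, fun x => hM.elim x⟩
    · rintro -
      exact ⟨fun _ _ => 0, fun _ => 0, fun x => hM.elim x, integrable_zero _ _ _,
        fun x => hM.elim x⟩
  obtain ⟨x₀⟩ := hM
  haveI : IsFiniteMeasure (Measure.map κ μ₁) := Measure.isFiniteMeasure_map μ₁ κ
  constructor
  · rintro ⟨s, t, hsint, htint, hfac⟩
    -- measurable representatives of `s` and `t`
    set t' : Ω₁ → ℝ := htint.1.mk t with ht'def
    have ht'meas : Measurable t' := htint.1.stronglyMeasurable_mk.measurable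
    have ht'ae : t =ᵐ[μ₁] t' := htint.1.ae_eq_mk
    have ht'int : Integrable t' μ₁ := htint.congr ht'ae
    set s' : M → Ω₂ → ℝ := fun x => (hsint x).1.mk (s x) with hs'def
    have hs'meas : ∀ x, Measurable (s' x) :=
      fun x => (hsint x).1.stronglyMeasurable_mk.measurable
    have hfac' : ∀ x, ∀ᵐ ω ∂μ₁, p₁ x ω = s' x (κ ω) * t' ω := by
      intro x
      have h1 : ∀ᵐ ω ∂μ₁, s x (κ ω) = s' x (κ ω) :=
        ae_of_ae_map hκ.aemeasurable (hsint x).1.ae_eq_mk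
      filter_upwards [hfac x, h1, ht'ae] with ω hω h1ω h2ω
      rw [hω, h1ω, h2ω]
    -- decompose `t'` into positive and negative parts
    set u : Ω₁ → ℝ≥0∞ := fun ω => ENNReal.ofReal (t' ω) with hu
    set v : Ω₁ → ℝ≥0∞ := fun ω => ENNReal.ofReal (-(t' ω)) with hv
    have humeas : Measurable u := ht'meas.ennreal_ofReal
    have hvmeas : Measurable v := ht'meas.neg.ennreal_ofReal
    have hbound : ∀ (w : Ω₁ → ℝ), Integrable w μ₁ →
        ∫⁻ ω, ENNReal.ofReal (w ω) ∂μ₁ ≠ ∞ := by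
      intro w hw
      refine ne_top_of_le_ne_top hw.2.ne (lintegral_mono fun ω => ?_)
      calc ENNReal.ofReal (w ω) ≤ ENNReal.ofReal |w ω| :=
            ENNReal.ofReal_le_ofReal (le_abs_self _)
        _ = ↑‖w ω‖₊ := (Real.enorm_eq_ofReal_abs _).symm
    have hufin : ∫⁻ ω, u ω ∂μ₁ ≠ ∞ := hbound t' ht'int
    have hvfin : ∫⁻ ω, v ω ∂μ₁ ≠ ∞ := hbound (fun ω => -(t' ω)) ht'int.neg
    set α : Measure Ω₁ := μ₁.withDensity u with hα
    set β : Measure Ω₁ := μ₁.withDensity v with hβ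
    haveI : IsFiniteMeasure α := isFiniteMeasure_withDensity hufin
    haveI : IsFiniteMeasure β := isFiniteMeasure_withDensity hvfin
    haveI : IsFiniteMeasure (Measure.map κ α) := Measure.isFiniteMeasure_map α κ
    haveI : IsFiniteMeasure (Measure.map κ β) := Measure.isFiniteMeasure_map β κ
    have hac : ∀ (γ : Measure Ω₁), γ ≪ μ₁ → Measure.map κ γ ≪ Measure.map κ μ₁ := by
      intro γ hγ
      refine Measure.AbsolutelyContinuous.mk fun E hE h0 => ?_
      rw [Measure.map_apply hκ hE] at h0 ⊢
      exact hγ h0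
    have hαac : Measure.map κ α ≪ Measure.map κ μ₁ :=
      hac α (withDensity_absolutelyContinuous μ₁ u)
    have hβac : Measure.map κ β ≪ Measure.map κ μ₁ :=
      hac β (withDensity_absolutelyContinuous μ₁ v)
    set A : Ω₂ → ℝ≥0∞ := (Measure.map κ α).rnDeriv (Measure.map κ μ₁) with hA
    set B : Ω₂ → ℝ≥0∞ := (Measure.map κ β).rnDeriv (Measure.map κ μ₁) with hB
    have hAmeas : Measurable A := Measure.measurable_rnDeriv _ _
    have hBmeas : Measurable B := Measure.measurable_rnDeriv _ _
    have hAeq : (Measure.map κ μ₁).withDensity A = Measure.map κ α :=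
      Measure.withDensity_rnDeriv_eq _ _ hαac
    have hBeq : (Measure.map κ μ₁).withDensity B = Measure.map κ β :=
      Measure.withDensity_rnDeriv_eq _ _ hβac
    -- key identity for the pushforward densities
    have key : ∀ x, ∀ᵐ ω₂ ∂(Measure.map κ μ₁),
        ENNReal.ofReal (q x ω₂)
          = A ω₂ * ENNReal.ofReal (s' x ω₂) + B ω₂ * ENNReal.ofReal (-(s' x ω₂)) := by
      intro x
      set fx : Ω₂ → ℝ≥0∞ := fun ω₂ => ENNReal.ofReal (s' x ω₂) with hfx
      set gx : Ω₂ → ℝ≥0∞ := fun ω₂ => ENNReal.ofReal (-(s' x ω₂)) with hgx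
      have hfxm : Measurable fx := (hs'meas x).ennreal_ofReal
      have hgxm : Measurable gx := (hs'meas x).neg.ennreal_ofReal
      have hmeq : (Measure.map κ μ₁).withDensity (fun ω₂ => ENNReal.ofReal (q x ω₂))
          = (Measure.map κ μ₁).withDensity (A * fx + B * gx) := by
        rw [← hq x]
        have h1 : μ₁.withDensity (fun ω => ENNReal.ofReal (p₁ x ω))
            = μ₁.withDensity
                ((u * fun ω => fx (κ ω)) + (v * fun ω => gx (κ ω))) := by
          apply withDensity_congr_ae
          filter_upwards [hfac' x] with ω hω
          simp only [Pi.add_apply, Pi.mul_apply, hfx, hgx]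
          rw [hω, aux_ofReal_mul_split]
          ring
        rw [h1,
          withDensity_add_left
            (show Measurable (u * fun ω => fx (κ ω)) from humeas.mul (hfxm.comp hκ))
            (v * fun ω => gx (κ ω)),
          Measure.map_add _ _ hκ,
          withDensity_mul μ₁ humeas (show Measurable (fun ω => fx (κ ω)) from hfxm.comp hκ),
          withDensity_mul μ₁ hvmeas (show Measurable (fun ω => gx (κ ω)) from hgxm.comp hκ),
          aux_map_withDensity_comp hκ α hfxm, aux_map_withDensity_comp hκ β hgxm,
          ← hAeq, ← hBeq, ← withDensity_mul _ hAmeas hfxm, ← withDensity_mul _ hBmeas hgxm,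
          ← withDensity_add_left (show Measurable (A * fx) from hAmeas.mul hfxm) (B * gx)]
      have := (withDensity_eq_iff_of_sigmaFinite
        ((hqmeas x).ennreal_ofReal.aemeasurable)
        (((hAmeas.mul hfxm).add (hBmeas.mul hgxm)).aemeasurable)).mp hmeq
      filter_upwards [this] with ω₂ h
      simpa [hfx, hgx] using h
    refine ⟨fun ω => p₁ x₀ ω / q x₀ (κ ω), fun x => ?_⟩
    have k1 := ae_of_ae_map hκ.aemeasurable (key x)
    have k2 := ae_of_ae_map hκ.aemeasurable (key x₀)
    have kA : ∀ᵐ ω ∂μ₁, A (κ ω) < ∞ :=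
      ae_of_ae_map hκ.aemeasurable (Measure.rnDeriv_lt_top _ _)
    have kB : ∀ᵐ ω ∂μ₁, B (κ ω) < ∞ :=
      ae_of_ae_map hκ.aemeasurable (Measure.rnDeriv_lt_top _ _)
    filter_upwards [hfac' x, hfac' x₀, k1, k2, kA, kB] with ω e1 e2 e3 e4 e5 e6
    have hreal : ∀ (y : M),
        ENNReal.ofReal (q y (κ ω))
          = A (κ ω) * ENNReal.ofReal (s' y (κ ω)) + B (κ ω) * ENNReal.ofReal (-(s' y (κ ω))) →
        q y (κ ω) = (A (κ ω)).toReal * max (s' y (κ ω)) 0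
          + (B (κ ω)).toReal * max (-(s' y (κ ω))) 0 := by
      intro y h
      have h2 := congrArg ENNReal.toReal h
      rwa [ENNReal.toReal_ofReal (hqpos y _).le,
        ENNReal.toReal_add (ENNReal.mul_ne_top e5.ne ENNReal.ofReal_ne_top)
          (ENNReal.mul_ne_top e6.ne ENNReal.ofReal_ne_top),
        ENNReal.toReal_mul, ENNReal.toReal_mul, ENNReal.toReal_ofReal',
        ENNReal.toReal_ofReal'] at h2
    have q1 := hreal x e3
    have q2 := hreal x₀ e4
    have hpx := hp₁pos x ω
    have hpx0 := hp₁pos x₀ ω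
    rw [e1] at hpx
    rw [e2] at hpx0
    rw [div_eq_div_iff (hqpos x (κ ω)).ne' (hqpos x₀ (κ ω)).ne', e1, e2, q1, q2]
    rcases lt_trichotomy (t' ω) 0 with hc | hc | hc
    · have ha : s' x (κ ω) < 0 := by nlinarith
      have ha0 : s' x₀ (κ ω) < 0 := by nlinarith
      rw [max_eq_right ha.le, max_eq_right ha0.le,
        max_eq_left (neg_nonneg.mpr ha.le), max_eq_left (neg_nonneg.mpr ha0.le)]
      ring
    · rw [hc, mul_zero] at hpx
      exact absurd hpx (lt_irrefl 0)
    · have ha : 0 < s' x (κ ω) := by nlinarith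
      have ha0 : 0 < s' x₀ (κ ω) := by nlinarith
      rw [max_eq_left ha.le, max_eq_left ha0.le,
        max_eq_right (neg_nonpos.mpr ha.le), max_eq_right (neg_nonpos.mpr ha0.le)]
      ring
  · rintro ⟨r, hr⟩
    refine ⟨q, fun ω => p₁ x₀ ω / q x₀ (κ ω), fun x => ?_, ?_, fun x => ?_⟩
    · refine ⟨(hqmeas x).aestronglyMeasurable, ?_⟩
      rw [hasFiniteIntegral_iff_ofReal (Filter.Eventually.of_forall fun ω₂ => (hqpos x ω₂).le)]
      have h1 : ∫⁻ ω₂, ENNReal.ofReal (q x ω₂) ∂(Measure.map κ μ₁)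
          = ((Measure.map κ μ₁).withDensity fun ω₂ => ENNReal.ofReal (q x ω₂)) Set.univ := by
        rw [withDensity_apply _ MeasurableSet.univ, setLIntegral_univ]
      rw [h1, ← hq x, Measure.map_apply hκ MeasurableSet.univ, Set.preimage_univ,
        withDensity_apply _ MeasurableSet.univ, setLIntegral_univ]
      exact (hasFiniteIntegral_iff_ofReal
        (Filter.Eventually.of_forall fun ω => (hp₁pos x ω).le)).mp (hp₁int x).2
    · have hmeast : Measurable fun ω => p₁ x₀ ω / q x₀ (κ ω) :=
        (hp₁meas x₀).div ((hqmeas x₀).comp hκ)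
      refine ⟨hmeast.aestronglyMeasurable, ?_⟩
      rw [hasFiniteIntegral_iff_ofReal (Filter.Eventually.of_forall fun ω =>
        (div_pos (hp₁pos x₀ ω) (hqpos x₀ _)).le)]
      have hstep : ∀ ω, ENNReal.ofReal (p₁ x₀ ω / q x₀ (κ ω))
          = ENNReal.ofReal (p₁ x₀ ω) * (ENNReal.ofReal (q x₀ (κ ω)))⁻¹ := by
        intro ω
        rw [ENNReal.ofReal_div_of_pos (hqpos x₀ _), ENNReal.div_eq_inv_mul, mul_comm]
      calc ∫⁻ ω, ENNReal.ofReal (p₁ x₀ ω / q x₀ (κ ω)) ∂μ₁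
          = ∫⁻ ω, ((fun ω => ENNReal.ofReal (p₁ x₀ ω))
              * fun ω => (ENNReal.ofReal (q x₀ (κ ω)))⁻¹) ω ∂μ₁ :=
            lintegral_congr fun ω => by simpa using hstep ω
        _ = ∫⁻ ω, (ENNReal.ofReal (q x₀ (κ ω)))⁻¹
              ∂(μ₁.withDensity fun ω => ENNReal.ofReal (p₁ x₀ ω)) :=
            (lintegral_withDensity_eq_lintegral_mul μ₁ (hp₁meas x₀).ennreal_ofReal
              (((hqmeas x₀).comp hκ).ennreal_ofReal.inv)).symm
        _ = ∫⁻ ω₂, (ENNReal.ofReal (q x₀ ω₂))⁻¹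
              ∂(Measure.map κ (μ₁.withDensity fun ω => ENNReal.ofReal (p₁ x₀ ω))) :=
            (lintegral_map (hqmeas x₀).ennreal_ofReal.inv hκ).symm
        _ = ∫⁻ ω₂, (ENNReal.ofReal (q x₀ ω₂))⁻¹
              ∂((Measure.map κ μ₁).withDensity fun ω₂ => ENNReal.ofReal (q x₀ ω₂)) := by
            rw [hq x₀]
        _ = ∫⁻ ω₂, ((fun ω₂ => ENNReal.ofReal (q x₀ ω₂))
              * fun ω₂ => (ENNReal.ofReal (q x₀ ω₂))⁻¹) ω₂ ∂(Measure.map κ μ₁) :=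
            lintegral_withDensity_eq_lintegral_mul _ (hqmeas x₀).ennreal_ofReal
              (hqmeas x₀).ennreal_ofReal.inv
        _ = ∫⁻ _, 1 ∂(Measure.map κ μ₁) :=
            lintegral_congr fun ω₂ => by
              simpa using ENNReal.mul_inv_cancel
                (ne_of_gt (ENNReal.ofReal_pos.mpr (hqpos x₀ ω₂))) ENNReal.ofReal_ne_top
        _ = Measure.map κ μ₁ Set.univ := lintegral_one
        _ < ∞ := measure_lt_top _ _
    · filter_upwards [hr x, hr x₀] with ω h1 h2
      rw [h2, ← h1, mul_comm, div_mul_cancel₀ _ (hqpos x _).ne']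
end

section
/- If $\kappa: (\Omega_1,\mu_1) \to \Omega_2$ is a statistic sufficient for the parameter $x \in M$ of a parametrized measure model $(M,\Omega_1,\mu_1,p_1)$, then the Fisher quadratic form is preserved: for all $x \in M$ and tangent vectors $V$, $\int_{\Omega_1} (\partial_V \ln \bar p_1(x,\omega_1))^2\, dp_1(x) = \int_{\Omega_2} (\partial_V \ln \kappa_*(\bar p_1)(x,\omega_2))^2\, d\kappa_*(p_1(x))$. -/
/-!
Sufficiency makes the likelihood ratio `p₁ y / p₁ x` a function of `κ`, and a density factor of
this form passes through the push-forward, so the transformed densities have the same ratio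
`q y / q x`. Hence `log p₁ y ω - log q y (κ ω)` does not depend on `y`: almost surely for all
rational points `y` of a line through `x` at once, hence on the whole line by continuity. So the
two scores agree `p₁ x`-a.e., and the integrals agree by the change of variables `ω₂ = κ ω`.
-/

open MeasureTheory ENNReal

section PushForward

variable {α β : Type*} [MeasurableSpace α] [MeasurableSpace β] {μ : Measure α} {κ : α → β}

lemma map_withDensity_comp (hκ : Measurable κ) {g : β → ℝ≥0∞} (hg : Measurable g) :
    (μ.withDensity (g ∘ κ)).map κ = (μ.map κ).withDensity g := by
  ext A hA
  rw [Measure.map_apply hκ hA, withDensity_apply _ (hκ hA), withDensity_apply _ hA,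
    setLIntegral_map hA hg hκ]
  rfl

lemma ae_eq_mul_of_map_withDensity [SigmaFinite (μ.map κ)] (hκ : Measurable κ)
    {f f' : α → ℝ≥0∞} {g g' r : β → ℝ≥0∞} (hf : Measurable f) (hr : Measurable r)
    (hg : AEMeasurable g (μ.map κ)) (hg' : AEMeasurable g' (μ.map κ))
    (hfg : (μ.withDensity f).map κ = (μ.map κ).withDensity g)
    (hfg' : (μ.withDensity f').map κ = (μ.map κ).withDensity g')
    (hf' : f' =ᵐ[μ] f * (r ∘ κ)) :
    g' =ᵐ[μ.map κ] g * r := by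
  refine (withDensity_eq_iff_of_sigmaFinite hg' (hg.mul hr.aemeasurable)).mp ?_
  rw [← hfg', withDensity_congr_ae hf', withDensity_mul μ hf (hr.comp hκ),
    map_withDensity_comp hκ hr, hfg, withDensity_mul₀ hg hr.aemeasurable]

lemma exists_measurable_ratio_of_factorization {p p' t : α → ℝ} {s s' : β → ℝ}
    (hκ : Measurable κ) (hp : ∀ ω, 0 < p ω)
    (hs : AEMeasurable s (μ.map κ)) (hs' : AEMeasurable s' (μ.map κ))
    (hfact : ∀ᵐ ω ∂μ, p ω = s (κ ω) * t ω) (hfact' : ∀ᵐ ω ∂μ, p' ω = s' (κ ω) * t ω) :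
    ∃ r : β → ℝ≥0∞, Measurable r ∧
      (fun ω => ENNReal.ofReal (p' ω)) =ᵐ[μ] (fun ω => ENNReal.ofReal (p ω)) * (r ∘ κ) := by
  refine ⟨fun b => ENNReal.ofReal (hs'.mk s' b / hs.mk s b),
    (hs'.measurable_mk.div hs.measurable_mk).ennreal_ofReal, ?_⟩
  filter_upwards [hfact, hfact', ae_eq_comp hκ.aemeasurable hs.ae_eq_mk,
    ae_eq_comp hκ.aemeasurable hs'.ae_eq_mk] with ω h h' hmk hmk'
  have hs_ne : s (κ ω) ≠ 0 := left_ne_zero_of_mul (h ▸ (hp ω).ne')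
  simp only [Pi.mul_apply, Function.comp_apply] at hmk hmk' ⊢
  rw [← hmk, ← hmk', ← ENNReal.ofReal_mul (hp ω).le, h, h']
  congr 1
  field_simp

end PushForward

lemma Real.log_sub_log_eq_of_ofReal_eq_mul {a a' b b' : ℝ} {R : ℝ≥0∞}
    (ha : 0 < a) (ha' : 0 < a') (hb : 0 < b) (hb' : 0 < b')
    (h : ENNReal.ofReal a' = ENNReal.ofReal a * R)
    (h' : ENNReal.ofReal b' = ENNReal.ofReal b * R) :
    Real.log a' - Real.log b' = Real.log a - Real.log b := by
  have toReal_eq {c c' : ℝ} (hc : 0 < c) (hc' : 0 < c')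
      (h : ENNReal.ofReal c' = ENNReal.ofReal c * R) : c' = c * R.toReal := by
    simpa [ENNReal.toReal_ofReal, hc.le, hc'.le] using congrArg ENNReal.toReal h
  obtain rfl := toReal_eq ha ha' h
  obtain rfl := toReal_eq hb hb' h'
  have hR : R.toReal ≠ 0 := (pos_of_mul_pos_right ha' ha.le).ne'
  rw [Real.log_mul ha.ne' hR, Real.log_mul hb.ne' hR]
  ring

lemma fderiv_apply_eq_of_sub_eq_on_rat_line {E : Type*} [NormedAddCommGroup E] [NormedSpace ℝ E]
    {f g : E → ℝ} (hf : Differentiable ℝ f) (hg : Differentiable ℝ g) {x V : E}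
    (h : ∀ r : ℚ, f (x + (r : ℝ) • V) - g (x + (r : ℝ) • V) = f x - g x) :
    fderiv ℝ f x V = fderiv ℝ g x V := by
  have hline (u : ℝ) : HasDerivAt (fun u : ℝ => x + u • V) V u := by
    simpa using ((hasDerivAt_id u).smul_const V).const_add x
  have hderiv (u : ℝ) : HasDerivAt (fun u : ℝ => f (x + u • V) - g (x + u • V))
      (fderiv ℝ f (x + u • V) V - fderiv ℝ g (x + u • V) V) u :=
    ((hf _).hasFDerivAt.comp_hasDerivAt u (hline u)).sub
      ((hg _).hasFDerivAt.comp_hasDerivAt u (hline u))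
  have hconst : (fun u : ℝ => f (x + u • V) - g (x + u • V)) = fun _ => f x - g x :=
    (continuous_iff_continuousAt.mpr fun u => (hderiv u).continuousAt).ext_on
      Rat.denseRange_cast continuous_const (by rintro _ ⟨r, rfl⟩; exact h r)
  have h0 := hderiv 0
  rw [hconst, zero_smul, add_zero] at h0
  exact sub_eq_zero.mp (hasDerivAt_const 0 _ |>.unique h0).symm

theorem stmt_7_general {E Ω₁ Ω₂ : Type*} [NormedAddCommGroup E] [NormedSpace ℝ E]
    [MeasurableSpace Ω₁] [MeasurableSpace Ω₂]
    (μ₁ : Measure Ω₁) [IsFiniteMeasure μ₁]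
    (κ : Ω₁ → Ω₂) (hκ : Measurable κ)
    (p₁ : E → Ω₁ → ℝ) (hp₁pos : ∀ x ω, 0 < p₁ x ω)
    (hp₁meas : ∀ x, Measurable (p₁ x))
    -- `q x` is the density of the transformed model: `κ_*(p̄₁)(x,·) = d(κ_*p₁(x))/d(κ_*μ₁)`
    (q : E → Ω₂ → ℝ) (hqpos : ∀ x ω₂, 0 < q x ω₂) (hqmeas : ∀ x, Measurable (q x))
    (hq : ∀ x, Measure.map κ (μ₁.withDensity (fun ω => ENNReal.ofReal (p₁ x ω)))
        = (Measure.map κ μ₁).withDensity (fun ω₂ => ENNReal.ofReal (q x ω₂)))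
    -- differentiability of the log-likelihoods in the parameter
    (hdiff : ∀ ω x, DifferentiableAt ℝ (fun y => Real.log (p₁ y ω)) x)
    (hdiff' : ∀ ω₂ x, DifferentiableAt ℝ (fun y => Real.log (q y ω₂)) x)
    -- 2-integrability of the scores
    (hL2' : ∀ x (V : E), MemLp (fun ω₂ => fderiv ℝ (fun y => Real.log (q y ω₂)) x V) 2
        ((Measure.map κ μ₁).withDensity (fun ω₂ => ENNReal.ofReal (q x ω₂))))
    -- sufficiency of `κ`: Fisher–Neyman factorization of the densities
    (hsuff : ∃ (s : E → Ω₂ → ℝ) (t : Ω₁ → ℝ),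
        (∀ x, Integrable (s x) (Measure.map κ μ₁)) ∧ Integrable t μ₁ ∧
        ∀ x, ∀ᵐ ω ∂μ₁, p₁ x ω = s x (κ ω) * t ω) :
    ∀ x (V : E),
      ∫ ω, (fderiv ℝ (fun y => Real.log (p₁ y ω)) x V) ^ 2
          ∂(μ₁.withDensity (fun ω => ENNReal.ofReal (p₁ x ω)))
        = ∫ ω₂, (fderiv ℝ (fun y => Real.log (q y ω₂)) x V) ^ 2
          ∂((Measure.map κ μ₁).withDensity (fun ω₂ => ENNReal.ofReal (q x ω₂))) := by
  obtain ⟨s, t, hs, -, hfact⟩ := hsuff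
  intro x V
  have hlog (y : E) : ∀ᵐ ω ∂μ₁, Real.log (p₁ y ω) - Real.log (q y (κ ω))
      = Real.log (p₁ x ω) - Real.log (q x (κ ω)) := by
    obtain ⟨r, hr, hpr⟩ := exists_measurable_ratio_of_factorization hκ (hp₁pos x)
      (hs x).aemeasurable (hs y).aemeasurable (hfact x) (hfact y)
    have hqr := ae_eq_comp hκ.aemeasurable <| ae_eq_mul_of_map_withDensity hκ
      (hp₁meas x).ennreal_ofReal hr (hqmeas x).ennreal_ofReal.aemeasurable
      (hqmeas y).ennreal_ofReal.aemeasurable (hq x) (hq y) hpr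
    filter_upwards [hpr, hqr] with ω hpω hqω
    exact Real.log_sub_log_eq_of_ofReal_eq_mul (hp₁pos x ω) (hp₁pos y ω) (hqpos x (κ ω))
      (hqpos y (κ ω)) hpω hqω
  have hscore : ∀ᵐ ω ∂μ₁, fderiv ℝ (fun y => Real.log (p₁ y ω)) x V
      = fderiv ℝ (fun y => Real.log (q y (κ ω))) x V := by
    filter_upwards [ae_all_iff.mpr fun r : ℚ => hlog (x + (r : ℝ) • V)] with ω h
    exact fderiv_apply_eq_of_sub_eq_on_rat_line (hdiff ω) (hdiff' (κ ω)) h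
  rw [← hq x, integral_map hκ.aemeasurable (by rw [hq x]; exact (hL2' x V).1.pow 2)]
  exact integral_congr_ae <| (withDensity_absolutelyContinuous _ _).ae_le <|
    hscore.mono fun ω h => congrArg (· ^ 2) h

/-- Invariance of the Fisher quadratic form under a sufficient statistic: if `κ` is
sufficient for the parameter of a 2-integrable parametrized measure model
`(M, Ω₁, μ₁, p₁)`, then for all `x` and tangent vectors `V`,
`∫_{Ω₁} (∂_V ln p̄₁(x,·))² dp₁(x) = ∫_{Ω₂} (∂_V ln κ_*(p̄₁)(x,·))² dκ_*(p₁(x))`. -/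
theorem stmt_7 {E Ω₁ Ω₂ : Type*} [NormedAddCommGroup E] [NormedSpace ℝ E]
    [MeasurableSpace Ω₁] [MeasurableSpace Ω₂]
    (μ₁ : Measure Ω₁) [IsFiniteMeasure μ₁]
    (κ : Ω₁ → Ω₂) (hκ : Measurable κ)
    (p₁ : E → Ω₁ → ℝ) (hp₁pos : ∀ x ω, 0 < p₁ x ω)
    (hp₁meas : ∀ x, Measurable (p₁ x)) (hp₁int : ∀ x, Integrable (p₁ x) μ₁)
    -- `q x` is the density of the transformed model: `κ_*(p̄₁)(x,·) = d(κ_*p₁(x))/d(κ_*μ₁)`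
    (q : E → Ω₂ → ℝ) (hqpos : ∀ x ω₂, 0 < q x ω₂) (hqmeas : ∀ x, Measurable (q x))
    (hq : ∀ x, Measure.map κ (μ₁.withDensity (fun ω => ENNReal.ofReal (p₁ x ω)))
        = (Measure.map κ μ₁).withDensity (fun ω₂ => ENNReal.ofReal (q x ω₂)))
    -- differentiability of the log-likelihoods in the parameter
    (hdiff : ∀ ω x, DifferentiableAt ℝ (fun y => Real.log (p₁ y ω)) x)
    (hdiff' : ∀ ω₂ x, DifferentiableAt ℝ (fun y => Real.log (q y ω₂)) x)
    -- 2-integrability of the scores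
    (hL2 : ∀ x (V : E), MemLp (fun ω => fderiv ℝ (fun y => Real.log (p₁ y ω)) x V) 2
        (μ₁.withDensity (fun ω => ENNReal.ofReal (p₁ x ω))))
    (hL2' : ∀ x (V : E), MemLp (fun ω₂ => fderiv ℝ (fun y => Real.log (q y ω₂)) x V) 2
        ((Measure.map κ μ₁).withDensity (fun ω₂ => ENNReal.ofReal (q x ω₂))))
    -- sufficiency of `κ`: Fisher–Neyman factorization of the densities
    (hsuff : ∃ (s : E → Ω₂ → ℝ) (t : Ω₁ → ℝ),
        (∀ x, Integrable (s x) (Measure.map κ μ₁)) ∧ Integrable t μ₁ ∧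
        ∀ x, ∀ᵐ ω ∂μ₁, p₁ x ω = s x (κ ω) * t ω) :
    ∀ x (V : E),
      ∫ ω, (fderiv ℝ (fun y => Real.log (p₁ y ω)) x V) ^ 2
          ∂(μ₁.withDensity (fun ω => ENNReal.ofReal (p₁ x ω)))
        = ∫ ω₂, (fderiv ℝ (fun y => Real.log (q y ω₂)) x V) ^ 2
          ∂((Measure.map κ μ₁).withDensity (fun ω₂ => ENNReal.ofReal (q x ω₂))) :=
  stmt_7_general μ₁ κ hκ p₁ hp₁pos hp₁meas q hqpos hqmeas hq hdiff hdiff' hL2' hsuff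
end

section
/- Let $\Pi: \mathbb{R}^n \to \mathbb{R}^m$ be a Markov mapping, i.e., the linear map $\Pi(E^*_k) = \sum_{j=1}^m \Pi_{kj} F^*_j$ with $\Pi_{ij} \ge 0$ and $\sum_{j=1}^m \Pi_{kj} = 1$ for each $k$. Then $\Pi$ has a left inverse (i.e., there is a statistic $\kappa: \Omega_m \to \Omega_n$ with $\kappa_* \circ \Pi = \mathrm{Id}$ on $\mathbb{R}^n_{\ge 0}$) if and only if $\Pi$ is a Markov congruent embedding, i.e., there is a partition $\{\hat F_1,\dots,\hat F_n\}$ of $\{F_1,\dots,F_m\}$ such that $\Pi_{ij} = 0$ whenever $F_j \notin \hat F_i$, and $\Pi(E^*_i) \neq 0$ for all $i$. -/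
open Finset

/-- A Markov mapping `P : ℝⁿ → ℝᵐ` (a row-stochastic matrix, `P(E*_k) = Σ_j P_{kj} F*_j`)
has a left inverse given by the push-forward `κ_*` of a statistic `κ : Ω_m → Ω_n`
(i.e. `κ_* ∘ P = Id` on the nonnegative orthant `ℝⁿ_{≥0}`) if and only if `P` is a
Markov congruent embedding: there is a partition of `{F_1, …, F_m}` into subsets
`F̂_1, …, F̂_n` (encoded by `part : Fin m → Fin n`, `F̂_i = part⁻¹(i)`) such that
`P_{ij} = 0` whenever `F_j ∉ F̂_i`, and `P(E*_i) ≠ 0` for all `i`. -/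
theorem stmt_14 (n m : ℕ) (P : Matrix (Fin n) (Fin m) ℝ)
    (hnonneg : ∀ i j, 0 ≤ P i j) (hrowsum : ∀ i, ∑ j, P i j = 1) :
    (∃ κ : Fin m → Fin n, ∀ x : Fin n → ℝ, (∀ i, 0 ≤ x i) →
        ∀ i, ∑ j ∈ Finset.univ.filter (fun j => κ j = i), (∑ k, x k * P k j) = x i) ↔
    (∃ part : Fin m → Fin n,
        (∀ i j, part j ≠ i → P i j = 0) ∧ (∀ i, ∃ j, P i j ≠ 0)) := by
  constructor
  · rintro ⟨κ, hκ⟩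
    have key : ∀ i i', ∑ j ∈ Finset.univ.filter (fun j => κ j = i'), P i j
        = if i = i' then 1 else 0 := by
      intro i i'
      have h := hκ (fun k => if k = i then 1 else 0)
        (by intro k; split <;> norm_num) i'
      have hx : ∀ j', (∑ k, (if k = i then (1:ℝ) else 0) * P k j') = P i j' := by
        intro j'
        rw [Finset.sum_eq_single i] <;> simp +contextual
      rw [Finset.sum_congr rfl (fun j' _ => hx j')] at h
      rw [h]
      by_cases hii : i = i' <;> simp [hii, eq_comm]
    refine ⟨κ, ?_, ?_⟩
    · intro i j hij
      have h := key i (κ j)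
      rw [if_neg (fun hc => hij hc.symm)] at h
      exact (Finset.sum_eq_zero_iff_of_nonneg (fun j' _ => hnonneg i j')).mp h j
        (by simp)
    · intro i
      have h := key i i
      rw [if_pos rfl] at h
      by_contra hc
      push_neg at hc
      rw [Finset.sum_congr rfl (fun j _ => hc j)] at h
      simp at h
  · rintro ⟨part, h0, hne⟩
    refine ⟨part, fun x hx i => ?_⟩
    have hswap : ∑ j ∈ Finset.univ.filter (fun j => part j = i), (∑ k, x k * P k j)
        = ∑ k, x k * ∑ j ∈ Finset.univ.filter (fun j => part j = i), P k j := by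
      rw [Finset.sum_comm]
      exact Finset.sum_congr rfl (fun k _ => by rw [Finset.mul_sum])
    rw [hswap]
    have hcol : ∀ k, (∑ j ∈ Finset.univ.filter (fun j => part j = i), P k j)
        = if k = i then 1 else 0 := by
      intro k
      by_cases hk : k = i
      · subst hk
        rw [if_pos rfl, Finset.sum_filter]
        rw [← hrowsum k]
        refine Finset.sum_congr rfl (fun j _ => ?_)
        by_cases hp : part j = k
        · simp [hp]
        · simp [hp, h0 k j hp]
      · rw [if_neg hk]
        refine Finset.sum_eq_zero (fun j hj => ?_)
        simp only [Finset.mem_filter] at hj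
        exact h0 k j (by rw [hj.2]; exact fun h => hk h.symm)
    rw [Finset.sum_congr rfl (fun k _ => by rw [hcol k])]
    rw [Finset.sum_eq_single i] <;> simp +contextual
end

section
/- (Existence of models realizing step functions) Let $M = (0,1)$, $\Omega$ a measurable space, $\mu$ a finite measure on $\Omega$, $x_0 \in M$, and $\tau = \sum_{i=1}^n \tau_i \chi_{D_i}$ a step function subject to a measurable partition $\Omega = D_1 \dot\cup \cdots \dot\cup D_n$ with associated statistic $\kappa: \Omega \to \Omega_n$. Then the family $p(x) := \exp\big(\sum_i (x - x_0)\tau_i \chi_{D_i}\big)\,\mu$ defines a $k$-integrable parametrized measure model $(M,\Omega,\mu,p)$ such that: (1) $\kappa$ is sufficient for the parameter; (2) $p(x_0) = \mu$; (3) $\partial_x \ln \bar p(x,\omega) = \tau(\omega)$ for all $x$. -/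
open MeasureTheory Set
open scoped ENNReal

/-!
Since the `D i` cover `Ω` and `κ` is constant on each of them, `D i = κ ⁻¹' {i}` and
`τ = τi ∘ κ`. Hence the density `exp ((x - x₀) τ)` factors through `κ`, and every integral of a
function of `τ` against `p x` is the finite sum `∑ i, exp ((x - x₀) τi i) g (τi i) μ (D i)`,
continuous in `x`. The densities are bounded and positive, so each `p x` is a finite measure
equivalent to `μ`: bounded `τ` lies in every `Lᵏ (p x)`, and its `L^∞` norm does not depend on `x`.
-/

lemma preimage_singleton_eq_of_iUnion_eq_univ {Ω ι : Type*} {D : ι → Set Ω} {κ : Ω → ι}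
    (hcover : ⋃ i, D i = univ) (hκ : ∀ i, ∀ ω ∈ D i, κ ω = i) (i : ι) :
    κ ⁻¹' {i} = D i := by
  ext ω
  refine ⟨fun hω => ?_, hκ i ω⟩
  obtain ⟨j, hj⟩ := mem_iUnion.mp (hcover.symm ▸ mem_univ ω : ω ∈ ⋃ i, D i)
  rwa [← mem_singleton_iff.mp hω, hκ j ω hj]

lemma sum_indicator_preimage_singleton {Ω ι M : Type*} [Fintype ι] [AddCommMonoid M]
    (κ : Ω → ι) (c : ι → M) (ω : Ω) :
    ∑ i, (κ ⁻¹' {i}).indicator (fun _ => c i) ω = c (κ ω) := by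
  classical
  simp [indicator_apply, eq_comm]

namespace MeasureTheory

variable {Ω ι : Type*} [MeasurableSpace Ω] (μ : Measure Ω)

lemma lintegral_comp_eq_sum_measure_preimage [Fintype ι] [MeasurableSpace ι]
    [MeasurableSingletonClass ι] {κ : Ω → ι} (hκ : Measurable κ) (g : ι → ℝ≥0∞) :
    ∫⁻ ω, g (κ ω) ∂μ = ∑ i, g i * μ (κ ⁻¹' {i}) := by
  rw [← lintegral_map (measurable_of_finite g) hκ, lintegral_fintype]
  simp_rw [Measure.map_apply hκ (measurableSet_singleton _)]

/-- The model of the theorem is `p x = expTilt μ τ (x - x₀)`. -/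
noncomputable def expTilt (f : Ω → ℝ) (a : ℝ) : Measure Ω :=
  μ.withDensity fun ω => ENNReal.ofReal (Real.exp (a * f ω))

variable {μ}

@[simp]
lemma expTilt_zero (f : Ω → ℝ) : expTilt μ f 0 = μ := by
  simp [expTilt]

lemma expTilt_absolutelyContinuous (f : Ω → ℝ) (a : ℝ) : expTilt μ f a ≪ μ :=
  withDensity_absolutelyContinuous μ _

lemma absolutelyContinuous_expTilt {f : Ω → ℝ} (hf : Measurable f) (a : ℝ) :
    μ ≪ expTilt μ f a :=
  withDensity_absolutelyContinuous' (hf.const_mul a).exp.ennreal_ofReal.aemeasurable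
    (ae_of_all μ fun _ => (ENNReal.ofReal_pos.mpr (Real.exp_pos _)).ne')

lemma eLpNorm_top_expTilt {E : Type*} [NormedAddCommGroup E] {f : Ω → ℝ} (hf : Measurable f)
    (a : ℝ) (g : Ω → E) : eLpNorm g ∞ (expTilt μ f a) = eLpNorm g ∞ μ := by
  simp only [eLpNorm_exponent_top]
  exact le_antisymm (eLpNormEssSup_mono_measure g (expTilt_absolutelyContinuous f a))
    (eLpNormEssSup_mono_measure g (absolutelyContinuous_expTilt hf a))

lemma isFiniteMeasure_expTilt [IsFiniteMeasure μ] {f : Ω → ℝ} {C : ℝ} (hC : ∀ ω, |f ω| ≤ C)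
    (a : ℝ) : IsFiniteMeasure (expTilt μ f a) := by
  refine isFiniteMeasure_withDensity_ofReal (.of_bounded (C := Real.exp (|a| * C)) ?_)
  refine ae_of_all μ fun ω => ?_
  rw [Real.norm_of_nonneg (Real.exp_pos _).le, Real.exp_le_exp]
  calc a * f ω ≤ |a * f ω| := le_abs_self _
    _ = |a| * |f ω| := abs_mul _ _
    _ ≤ |a| * C := mul_le_mul_of_nonneg_left (hC ω) (abs_nonneg a)

section Step

variable [Fintype ι] [MeasurableSpace ι] [MeasurableSingletonClass ι] {κ : Ω → ι}

lemma lintegral_expTilt_comp (hκ : Measurable κ) (c : ι → ℝ) (a : ℝ) (g : ι → ℝ≥0∞) :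
    ∫⁻ ω, g (κ ω) ∂(expTilt μ (c ∘ κ) a) =
      ∑ i, ENNReal.ofReal (Real.exp (a * c i)) * (g i * μ (κ ⁻¹' {i})) := by
  have hdens : Measurable fun ω => ENNReal.ofReal (Real.exp (a * (c ∘ κ) ω)) :=
    (measurable_of_finite fun i => ENNReal.ofReal (Real.exp (a * c i))).comp hκ
  refine (lintegral_withDensity_eq_lintegral_mul μ hdens
    ((measurable_of_finite g).comp hκ)).trans ?_
  simp only [Pi.mul_apply, Function.comp_apply]
  rw [lintegral_comp_eq_sum_measure_preimage μ hκ
    fun i => ENNReal.ofReal (Real.exp (a * c i)) * g i]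
  simp only [mul_assoc]

lemma continuous_toReal_eLpNorm_expTilt_comp [IsFiniteMeasure μ] (hκ : Measurable κ)
    (c : ι → ℝ) (k : ℝ≥0∞) :
    Continuous fun a => (eLpNorm (c ∘ κ) k (expTilt μ (c ∘ κ) a)).toReal := by
  rcases eq_or_ne k 0 with rfl | hk0
  · simpa using continuous_const
  rcases eq_or_ne k ∞ with rfl | hktop
  · simpa only [eLpNorm_top_expTilt ((measurable_of_finite c).comp hκ)] using continuous_const
  have hsum : ∀ a, eLpNorm (c ∘ κ) k (expTilt μ (c ∘ κ) a) =
      (∑ i, ENNReal.ofReal (Real.exp (a * c i)) * (‖c i‖ₑ ^ k.toReal * μ (κ ⁻¹' {i}))) ^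
        (1 / k.toReal) := fun a => by
    rw [eLpNorm_eq_lintegral_rpow_enorm_toReal hk0 hktop]
    exact congrArg (· ^ (1 / k.toReal))
      (lintegral_expTilt_comp hκ c a fun i => ‖c i‖ₑ ^ k.toReal)
  have hfin : ∀ i, ‖c i‖ₑ ^ k.toReal * μ (κ ⁻¹' {i}) ≠ ∞ := fun i =>
    ENNReal.mul_ne_top (ENNReal.rpow_ne_top_of_nonneg ENNReal.toReal_nonneg enorm_ne_top)
      (measure_ne_top μ _)
  simp_rw [hsum]
  refine ENNReal.continuousOn_toReal.comp_continuous
    (ENNReal.continuous_rpow_const.comp (continuous_finsetSum _ fun i _ => ?_)) fun a => ?_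
  · exact (ENNReal.continuous_mul_const (hfin i)).comp
      (ENNReal.continuous_ofReal.comp (by fun_prop))
  · exact ENNReal.rpow_ne_top_of_nonneg (by positivity) (ENNReal.sum_ne_top.mpr fun i _ =>
      ENNReal.mul_ne_top ENNReal.ofReal_ne_top (hfin i))

end Step

end MeasureTheory

theorem stmt_15_general {Ω : Type*} [MeasurableSpace Ω] (μ : Measure Ω) [IsFiniteMeasure μ]
    (n : ℕ) (D : Fin n → Set Ω) (hD : ∀ i, MeasurableSet (D i))
    (hcover : (⋃ i, D i) = Set.univ)
    (κ : Ω → Fin n) (hκ : ∀ i, ∀ ω ∈ D i, κ ω = i)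
    (τi : Fin n → ℝ)
    (τ : Ω → ℝ) (hτ : τ = fun ω => ∑ i, Set.indicator (D i) (fun _ => τi i) ω)
    (x₀ : ℝ)
    (p : ℝ → Measure Ω)
    (hp : ∀ x, p x = μ.withDensity fun ω => ENNReal.ofReal (Real.exp ((x - x₀) * τ ω))) :
    -- (1) `κ` is sufficient for the parameter
    (∃ (s : ℝ → Fin n → ℝ) (t : Ω → ℝ), ∀ x ω,
        Real.exp ((x - x₀) * τ ω) = s x (κ ω) * t ω) ∧
    -- (2) the model passes through `μ` at `x₀`
    p x₀ = μ ∧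
    -- (3) the score is the step function `τ`
    (∀ x ω, deriv (fun y => Real.log (Real.exp ((y - x₀) * τ ω))) x = τ ω) ∧
    -- `k`-integrability for every `k`, with norm continuous in `x`
    (∀ (k : ℝ≥0∞) (x : ℝ), x ∈ Set.Ioo (0:ℝ) 1 → MemLp τ k (p x)) ∧
    (∀ k : ℝ≥0∞, Continuous fun x : ℝ => (eLpNorm τ k (p x)).toReal) := by
  have hpre := preimage_singleton_eq_of_iUnion_eq_univ hcover hκ
  have hκm : Measurable κ := measurable_to_countable' fun i => hpre i ▸ hD i
  obtain rfl : τ = τi ∘ κ := by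
    funext ω
    simp only [hτ, ← hpre, sum_indicator_preimage_singleton, Function.comp_apply]
  replace hp : ∀ x, p x = expTilt μ (τi ∘ κ) (x - x₀) := hp
  obtain ⟨C, hC⟩ := (finite_range fun i => |τi i|).bddAbove
  refine ⟨⟨fun x i => Real.exp ((x - x₀) * τi i), fun _ => 1, fun x ω => (mul_one _).symm⟩,
    by simp [hp], fun _ _ => by simp, fun k x _ => ?_, fun k => ?_⟩
  · have hbound : ∀ ω, |(τi ∘ κ) ω| ≤ C := fun ω => hC ⟨κ ω, rfl⟩
    have := isFiniteMeasure_expTilt (μ := μ) hbound (x - x₀)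
    rw [hp]
    exact .of_bound ((measurable_of_finite τi).comp hκm).aestronglyMeasurable C
      (ae_of_all _ hbound)
  · simp_rw [hp]
    exact (continuous_toReal_eLpNorm_expTilt_comp hκm τi k).comp (continuous_sub_right x₀)

/-- Existence of models realizing step functions: given a finite measure `μ` on `Ω`,
`x₀ ∈ M = (0,1)`, a measurable partition `Ω = D₁ ∪ … ∪ Dₙ` with associated statistic
`κ : Ω → Ωₙ`, and a step function `τ = Σ τᵢ χ_{Dᵢ}` subject to `κ`, the family
`p(x) = exp((x - x₀) τ) · μ` is a `k`-integrable parametrized measure model such that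
(1) `κ` is sufficient for the parameter (Fisher–Neyman factorization with `t ≡ 1`),
(2) `p(x₀) = μ`, and (3) `∂_x ln p̄(x,ω) = τ(ω)`. -/
theorem stmt_15 {Ω : Type*} [MeasurableSpace Ω] (μ : Measure Ω) [IsFiniteMeasure μ]
    (n : ℕ) (D : Fin n → Set Ω) (hD : ∀ i, MeasurableSet (D i))
    (hdisj : Pairwise fun i j => Disjoint (D i) (D j))
    (hcover : (⋃ i, D i) = Set.univ)
    (κ : Ω → Fin n) (hκ : ∀ i, ∀ ω ∈ D i, κ ω = i)
    (τi : Fin n → ℝ)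
    (τ : Ω → ℝ) (hτ : τ = fun ω => ∑ i, Set.indicator (D i) (fun _ => τi i) ω)
    (x₀ : ℝ) (hx₀ : x₀ ∈ Set.Ioo (0:ℝ) 1)
    (p : ℝ → Measure Ω)
    (hp : ∀ x, p x = μ.withDensity fun ω => ENNReal.ofReal (Real.exp ((x - x₀) * τ ω))) :
    -- (1) `κ` is sufficient for the parameter
    (∃ (s : ℝ → Fin n → ℝ) (t : Ω → ℝ), ∀ x ω,
        Real.exp ((x - x₀) * τ ω) = s x (κ ω) * t ω) ∧
    -- (2) the model passes through `μ` at `x₀`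
    p x₀ = μ ∧
    -- (3) the score is the step function `τ`
    (∀ x ω, deriv (fun y => Real.log (Real.exp ((y - x₀) * τ ω))) x = τ ω) ∧
    -- `k`-integrability for every `k`, with norm continuous in `x`
    (∀ (k : ℝ≥0∞) (x : ℝ), x ∈ Set.Ioo (0:ℝ) 1 → MemLp τ k (p x)) ∧
    (∀ k : ℝ≥0∞, Continuous fun x : ℝ => (eLpNorm τ k (p x)).toReal) :=
  stmt_15_general μ n D hD hcover κ hκ τi τ hτ x₀ p hp
end

section
/- (Stratification along exponential segments) Let $\mu_0',\mu_1' \in \mathcal{M}_+(\Omega,\mu_0)$ with $f_i := \log(d\mu_i'/d\mu_0)$, and for $\lambda \in [0,1]$ set $\mu'_\lambda := \exp(f_0 + \lambda(f_1-f_0))\,\mu_0$ (assumed to be finite measures). Then: (1) the measures $\mu'_\lambda$ for $\lambda \in (0,1)$ are all similar to each other; (2) $\mu'_\lambda \preceq \mu'_0$ and $\mu'_\lambda \preceq \mu'_1$ for $\lambda \in (0,1)$, where $\mu' \preceq \mu$ means $d\mu'/d\mu \in L^p(\mu)$ for some $p > 1$. -/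
/-!
With `φ = exp (f1 - f0)`, the density of `μ'_(l+c)` with respect to `μ'_l` is `φ^c`, and
`φ^(p c)` times the density of `μ'_l` is the density of `μ'_(l+p c)`. So `φ^c ∈ L^p(μ'_l)` as soon
as `l + p c ∈ [0,1]`, and when `l + c` is interior this holds for every `p > 1` close enough to `1`.
-/

open MeasureTheory Filter Set Topology

lemma exists_one_lt_add_mul_mem_Ioo {l c : ℝ} (h : l + c ∈ Ioo (0 : ℝ) 1) :
    ∃ p : ℝ, 1 < p ∧ l + p * c ∈ Ioo (0 : ℝ) 1 := by
  have hnhds : ∀ᶠ p in 𝓝 (1 : ℝ), l + p * c ∈ Ioo (0 : ℝ) 1 :=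
    (continuous_const.add (continuous_id.mul continuous_const)).continuousAt.preimage_mem_nhds
      (by simpa using isOpen_Ioo.mem_nhds h)
  obtain ⟨p, hp, hp1⟩ :=
    ((hnhds.filter_mono nhdsWithin_le_nhds).and (self_mem_nhdsWithin (s := Ioi 1))).exists
  exact ⟨p, hp1, hp⟩

lemma memLp_exp_withDensity_exp_iff {Ω : Type*} [MeasurableSpace Ω] {μ : Measure Ω}
    {g h : Ω → ℝ} (hg : Measurable g) (hh : Measurable h) {p : ℝ} (hp : 0 < p) :
    MemLp (fun ω => Real.exp (g ω)) (ENNReal.ofReal p)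
        (μ.withDensity fun ω => ENNReal.ofReal (Real.exp (h ω))) ↔
      Integrable (fun ω => Real.exp (h ω + p * g ω)) μ := by
  rw [← integrable_norm_rpow_iff hg.exp.aestronglyMeasurable (by simpa using hp)
      ENNReal.ofReal_ne_top,
    integrable_withDensity_iff hh.exp.ennreal_ofReal (.of_forall fun _ => ENNReal.ofReal_lt_top)]
  refine integrable_congr (.of_forall fun ω => ?_)
  simp only [Real.norm_eq_abs, Real.abs_exp, ENNReal.toReal_ofReal hp.le,
    ENNReal.toReal_ofReal (Real.exp_nonneg _), ← Real.exp_mul, ← Real.exp_add]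
  ring_nf

lemma exists_one_lt_memLp_exp_mul_withDensity_segment {Ω : Type*} [MeasurableSpace Ω]
    {μ : Measure Ω} {f0 f1 : Ω → ℝ} (hf0 : Measurable f0) (hf1 : Measurable f1)
    (hint : ∀ l ∈ Icc (0 : ℝ) 1,
      Integrable (fun ω => Real.exp (f0 ω + l * (f1 ω - f0 ω))) μ)
    {l c : ℝ} (hlc : l + c ∈ Ioo (0 : ℝ) 1) :
    ∃ p : ℝ, 1 < p ∧ MemLp (fun ω => Real.exp (c * (f1 ω - f0 ω))) (ENNReal.ofReal p)
      (μ.withDensity fun ω => ENNReal.ofReal (Real.exp (f0 ω + l * (f1 ω - f0 ω)))) := by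
  obtain ⟨p, hp, hlpc⟩ := exists_one_lt_add_mul_mem_Ioo hlc
  refine ⟨p, hp, (memLp_exp_withDensity_exp_iff (g := fun ω => c * (f1 ω - f0 ω))
    (h := fun ω => f0 ω + l * (f1 ω - f0 ω)) (by fun_prop) (by fun_prop)
    (zero_lt_one.trans hp)).2 ?_⟩
  convert hint (l + p * c) (Ioo_subset_Icc_self hlpc) using 3
  ring

/-- Stratification along exponential segments: for `μ'_λ := exp(f₀ + λ(f₁-f₀))·μ₀`
(assumed finite for `λ ∈ [0,1]`), (1) all interior measures `μ'_λ`, `λ ∈ (0,1)`, are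
similar to each other, and (2) `μ'_λ ≼ μ'_0` and `μ'_λ ≼ μ'_1` for `λ ∈ (0,1)`,
where `μ' ≼ μ` means the density `dμ'/dμ` lies in `L^p(μ)` for some `p > 1`. -/
theorem stmt_18 {Ω : Type*} [MeasurableSpace Ω] (μ0 : Measure Ω)
    (f0 f1 : Ω → ℝ) (hf0 : Measurable f0) (hf1 : Measurable f1)
    (hint : ∀ l ∈ Set.Icc (0:ℝ) 1,
      Integrable (fun ω => Real.exp (f0 ω + l * (f1 ω - f0 ω))) μ0)
    (μ' : ℝ → Measure Ω)
    (hμ' : ∀ l, μ' l = μ0.withDensity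
      fun ω => ENNReal.ofReal (Real.exp (f0 ω + l * (f1 ω - f0 ω)))) :
    -- (1) interior measures are all similar: each has an `L^p`-density, `p > 1`,
    -- with respect to any other
    (∀ l₁ ∈ Set.Ioo (0:ℝ) 1, ∀ l₂ ∈ Set.Ioo (0:ℝ) 1,
      ∃ p : ℝ, 1 < p ∧
        MemLp (fun ω => Real.exp ((l₁ - l₂) * (f1 ω - f0 ω)))
          (ENNReal.ofReal p) (μ' l₂)) ∧
    -- (2) each interior measure is dominated in the sense `≼` by both endpoints
    (∀ l ∈ Set.Ioo (0:ℝ) 1,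
      (∃ p : ℝ, 1 < p ∧
        MemLp (fun ω => Real.exp (l * (f1 ω - f0 ω)))
          (ENNReal.ofReal p) (μ' 0)) ∧
      (∃ p : ℝ, 1 < p ∧
        MemLp (fun ω => Real.exp ((l - 1) * (f1 ω - f0 ω)))
          (ENNReal.ofReal p) (μ' 1))) := by
  refine ⟨fun l₁ hl₁ l₂ _ => ?_, fun l hl => ⟨?_, ?_⟩⟩
  · rw [hμ' l₂]
    exact exists_one_lt_memLp_exp_mul_withDensity_segment hf0 hf1 hint (by simpa using hl₁)
  · rw [hμ' 0]
    exact exists_one_lt_memLp_exp_mul_withDensity_segment hf0 hf1 hint (by simpa using hl)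
  · rw [hμ' 1]
    exact exists_one_lt_memLp_exp_mul_withDensity_segment hf0 hf1 hint (by simpa using hl)
end
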